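/- Every 2-crossed module of Lie algebras (𝔩 →t 𝔥 →t 𝔤) gives rise to a strict 3-term L∞-algebra with underlying complex 𝔩 →t 𝔥 →t 𝔤 (in degrees −2, −1, 0), with μ₁ = t, μ₂ on degree-0 elements the Lie bracket of 𝔤, μ₂ given by the 𝔤-actions between degree 0 and degrees −1, −2, and μ₂(Y₁,Y₂) := −{Y₁,Y₂} − {Y₂,Y₁} on 𝔥×𝔥; in particular all the L∞ homotopy Jacobi identities (with μ₃ = μ₄ = 0) hold. -/
import Mathlib


/-- A 2-crossed module of (real) Lie algebras `𝔩 → 𝔥 → 𝔤`. -/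
structure TwoCrossedModuleLie (𝔩 𝔥 𝔤 : Type*)
    [LieRing 𝔩] [LieAlgebra ℝ 𝔩] [LieRing 𝔥] [LieAlgebra ℝ 𝔥]
    [LieRing 𝔤] [LieAlgebra ℝ 𝔤] where
  /-- the map `t : 𝔩 → 𝔥` -/
  tL : 𝔩 →ₗ⁅ℝ⁆ 𝔥
  /-- the map `t : 𝔥 → 𝔤` -/
  tH : 𝔥 →ₗ⁅ℝ⁆ 𝔤
  t_comp : ∀ Z : 𝔩, tH (tL Z) = 0
  /-- the action of `𝔤` on `𝔥` -/
  actH : 𝔤 →ₗ[ℝ] 𝔥 →ₗ[ℝ] 𝔥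
  /-- the action of `𝔤` on `𝔩` -/
  actL : 𝔤 →ₗ[ℝ] 𝔩 →ₗ[ℝ] 𝔩
  actH_lie : ∀ (X₁ X₂ : 𝔤) (Y : 𝔥),
    actH ⁅X₁, X₂⁆ Y = actH X₁ (actH X₂ Y) - actH X₂ (actH X₁ Y)
  actH_der : ∀ (X : 𝔤) (Y₁ Y₂ : 𝔥),
    actH X ⁅Y₁, Y₂⁆ = ⁅actH X Y₁, Y₂⁆ + ⁅Y₁, actH X Y₂⁆
  actL_lie : ∀ (X₁ X₂ : 𝔤) (Z : 𝔩),
    actL ⁅X₁, X₂⁆ Z = actL X₁ (actL X₂ Z) - actL X₂ (actL X₁ Z)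
  actL_der : ∀ (X : 𝔤) (Z₁ Z₂ : 𝔩),
    actL X ⁅Z₁, Z₂⁆ = ⁅actL X Z₁, Z₂⁆ + ⁅Z₁, actL X Z₂⁆
  tH_equiv : ∀ (X : 𝔤) (Y : 𝔥), tH (actH X Y) = ⁅X, tH Y⁆
  tL_equiv : ∀ (X : 𝔤) (Z : 𝔩), tL (actL X Z) = actH X (tL Z)
  /-- the Peiffer lifting `{-,-} : 𝔥 × 𝔥 → 𝔩` -/
  pf : 𝔥 →ₗ[ℝ] 𝔥 →ₗ[ℝ] 𝔩
  pf_equiv : ∀ (X : 𝔤) (Y₁ Y₂ : 𝔥),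
    actL X (pf Y₁ Y₂) = pf (actH X Y₁) Y₂ + pf Y₁ (actH X Y₂)
  pf_peiffer : ∀ Y₁ Y₂ : 𝔥, tL (pf Y₁ Y₂) = ⁅Y₁, Y₂⁆ - actH (tH Y₁) Y₂
  pf_t_t : ∀ Z₁ Z₂ : 𝔩, pf (tL Z₁) (tL Z₂) = ⁅Z₁, Z₂⁆
  pf_bracket_left : ∀ Y₁ Y₂ Y₃ : 𝔥, pf ⁅Y₁, Y₂⁆ Y₃ =
    actL (tH Y₁) (pf Y₂ Y₃) + pf Y₁ ⁅Y₂, Y₃⁆ -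
      actL (tH Y₂) (pf Y₁ Y₃) - pf Y₂ ⁅Y₁, Y₃⁆
  pf_bracket_right : ∀ Y₁ Y₂ Y₃ : 𝔥,
    pf Y₁ ⁅Y₂, Y₃⁆ = pf (tL (pf Y₁ Y₂)) Y₃ - pf (tL (pf Y₁ Y₃)) Y₂
  pf_t_mix : ∀ (Z : 𝔩) (Y : 𝔥), pf (tL Z) Y + pf Y (tL Z) = - actL (tH Y) Z

/-- The binary bracket `μ₂(Y₁,Y₂) := −{Y₁,Y₂} − {Y₂,Y₁}` on degree `−1` elements. -/
def TwoCrossedModuleLie.mu2h {𝔩 𝔥 𝔤 : Type*}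
    [LieRing 𝔩] [LieAlgebra ℝ 𝔩] [LieRing 𝔥] [LieAlgebra ℝ 𝔥]
    [LieRing 𝔤] [LieAlgebra ℝ 𝔤] (C : TwoCrossedModuleLie 𝔩 𝔥 𝔤)
    (Y₁ Y₂ : 𝔥) : 𝔩 :=
  - C.pf Y₁ Y₂ - C.pf Y₂ Y₁

/-- Every 2-crossed module of Lie algebras gives rise to a strict 3-term L∞-algebra
with `μ₁ = t`, `μ₂` given by the bracket of `𝔤`, the `𝔤`-actions, and
`μ₂(Y₁,Y₂) := −{Y₁,Y₂} − {Y₂,Y₁}` on `𝔥 × 𝔥`: all the L∞ homotopy Jacobi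
identities (with `μ₃ = μ₄ = 0`) hold. -/
theorem twoCrossedModuleLie_strict_Linfty {𝔩 𝔥 𝔤 : Type*}
    [LieRing 𝔩] [LieAlgebra ℝ 𝔩] [LieRing 𝔥] [LieAlgebra ℝ 𝔥]
    [LieRing 𝔤] [LieAlgebra ℝ 𝔤] (C : TwoCrossedModuleLie 𝔩 𝔥 𝔤) :
    -- μ₁ ∘ μ₁ = 0
    (∀ Z : 𝔩, C.tH (C.tL Z) = 0) ∧
    -- μ₂ is (graded) antisymmetric in degree (−1,−1): it is symmetric
    (∀ Y₁ Y₂ : 𝔥, C.mu2h Y₁ Y₂ = C.mu2h Y₂ Y₁) ∧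
    -- compatibility of μ₁ with μ₂ in degrees (0,−1), (0,−2), (−1,−1)
    (∀ (X : 𝔤) (Y : 𝔥), C.tH (C.actH X Y) = ⁅X, C.tH Y⁆) ∧
    (∀ (X : 𝔤) (Z : 𝔩), C.tL (C.actL X Z) = C.actH X (C.tL Z)) ∧
    (∀ Y₁ Y₂ : 𝔥, C.tL (C.mu2h Y₁ Y₂) = C.actH (C.tH Y₁) Y₂ + C.actH (C.tH Y₂) Y₁) ∧
    -- homotopy Jacobi identity (exact, since μ₃ = 0) in degrees (0,0,0)
    (∀ X₁ X₂ X₃ : 𝔤, ⁅X₁, ⁅X₂, X₃⁆⁆ = ⁅⁅X₁, X₂⁆, X₃⁆ + ⁅X₂, ⁅X₁, X₃⁆⁆) ∧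
    -- Jacobi identity in degrees (0,0,−1) and (0,0,−2)
    (∀ (X₁ X₂ : 𝔤) (Y : 𝔥),
      C.actH ⁅X₁, X₂⁆ Y = C.actH X₁ (C.actH X₂ Y) - C.actH X₂ (C.actH X₁ Y)) ∧
    (∀ (X₁ X₂ : 𝔤) (Z : 𝔩),
      C.actL ⁅X₁, X₂⁆ Z = C.actL X₁ (C.actL X₂ Z) - C.actL X₂ (C.actL X₁ Z)) ∧
    -- Jacobi identity in degrees (0,−1,−1)
    (∀ (X : 𝔤) (Y₁ Y₂ : 𝔥),
      C.actL X (C.mu2h Y₁ Y₂) = C.mu2h (C.actH X Y₁) Y₂ + C.mu2h Y₁ (C.actH X Y₂)) := by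

  refine ⟨C.t_comp, ?_, C.tH_equiv, C.tL_equiv, ?_, ?_, C.actH_lie, C.actL_lie, ?_⟩
  · intro Y₁ Y₂
    simp [TwoCrossedModuleLie.mu2h]; abel
  · intro Y₁ Y₂
    simp [TwoCrossedModuleLie.mu2h, C.pf_peiffer]
    rw [← lie_skew Y₂ Y₁]
    abel
  · intro X₁ X₂ X₃
    rw [leibniz_lie]
  · intro X Y₁ Y₂
    simp [TwoCrossedModuleLie.mu2h, C.pf_equiv]
    abel
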